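/- With 𝐋(s) = 𝐀 − s𝐄 the linearization pencil of R(s) as above, every eigenvalue of R(s) is an eigenvalue of 𝐋(s): if R(λ)x = 0 for some x ≠ 0 with C₀+λC₁ invertible, then 𝐋(λ)·((1, λ, Φ(λ))ᵀ ⊗ x) = 0 and (1, λ, Φ(λ))ᵀ ⊗ x ≠ 0. -/

import Mathlib

/-!
The vector `(1, λ, Φ(λ)) ⊗ x` is annihilated by `𝐋(λ)` block row by block row. The mixed-product
rule `(aᵀ ⊗ B)(v ⊗ x) = (aᵀv) Bx` turns the first block row into `R(λ)x`; the second is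
`λx - λx`; the third is `((c₀ + λc₁) + (C₀ + λC₁)Φ(λ)) ⊗ x`, which vanishes by the definition
of `Φ`. The vector is nonzero because its first block is `x`.
-/

open Matrix

namespace Matrix

variable {ι κ m n R : Type*} [Fintype ι] [Fintype n]

theorem dotProduct_mul_mulVec_apply [CommSemiring R] (a v : ι → R) (B : Matrix m n R)
    (x : n → R) (i : m) :
    (a ⬝ᵥ v) * (B *ᵥ x) i = ∑ p : ι × n, a p.1 * B i p.2 * (v p.1 * x p.2) := by
  simp only [dotProduct, mulVec, Fintype.sum_mul_sum, Fintype.sum_prod_type]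
  exact Finset.sum_congr rfl fun _ _ => Finset.sum_congr rfl fun _ _ => by ring

theorem sum_smul_mulVec_apply [CommSemiring R] [Fintype κ] (a : κ → ι → R)
    (B : κ → Matrix m n R) (v : ι → R) (x : n → R) (i : m) :
    ((∑ j, (a j ⬝ᵥ v) • B j) *ᵥ x) i =
      ∑ p : ι × n, (∑ j, a j p.1 * B j i p.2) * (v p.1 * x p.2) := by
  simp only [sum_mulVec, Finset.sum_apply, smul_mulVec, Pi.smul_apply, smul_eq_mul,
    dotProduct_mul_mulVec_apply, Finset.sum_mul]
  exact Finset.sum_comm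

theorem sum_ite_mul_add_sum_kronecker_one_apply [CommSemiring R] [DecidableEq n]
    (c : m → R) (C : Matrix m ι R) (v : ι → R) (x : n → R) (k : m) (i : n) :
    ∑ i', (c k * if i = i' then 1 else 0) * x i' +
      ∑ p : ι × n, (C k p.1 * if i = p.2 then 1 else 0) * (v p.1 * x p.2) =
      (c + C *ᵥ v) k * x i := by
  have hblock := dotProduct_mul_mulVec_apply (C k) v 1 x i
  simp only [one_apply, one_mulVec] at hblock
  rw [← hblock]
  simp only [mul_ite, mul_one, mul_zero, ite_mul, zero_mul, Finset.sum_ite_eq, Finset.mem_univ,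
    if_true, Pi.add_apply, add_mul]
  rfl

theorem mulVec_nonsing_inv_mulVec [DecidableEq n] [CommRing R] {A : Matrix n n R}
    (hA : IsUnit A) (v : n → R) : A *ᵥ (A⁻¹ *ᵥ v) = v := by
  rw [mulVec_mulVec, mul_nonsing_inv _ ((isUnit_iff_isUnit_det A).mp hA), one_mulVec]

end Matrix

/-- Every eigenvalue of `R(s)` is an eigenvalue of the linearization `𝐋(s)`:
if `R(λ)x = 0` with `x ≠ 0` and `C₀+λC₁` invertible, then
`𝐋(λ)·((1,λ,Φ(λ))ᵀ ⊗ x) = 0` and the vector `(1,λ,Φ(λ))ᵀ ⊗ x` is nonzero. -/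
theorem eigenvalue_of_R_is_eigenvalue_of_L {n d m : ℕ} (s : ℂ)
    (A0 A1 A2 : Matrix (Fin n) (Fin n) ℂ) (Am : Fin m → Matrix (Fin n) (Fin n) ℂ)
    (α : Fin m → ℂ) (a : Fin m → Fin d → ℂ)
    (c0 c1 : Fin d → ℂ) (C0 C1 : Matrix (Fin d) (Fin d) ℂ)
    (hC : IsUnit (C0 + s • C1)) (x : Fin n → ℂ) (hx : x ≠ 0) :
    let Φ : Fin d → ℂ := -((C0 + s • C1)⁻¹.mulVec (c0 + s • c1))
    let R : Matrix (Fin n) (Fin n) ℂ :=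
      A0 + s • A1 + s ^ 2 • A2 + ∑ j, (α j + a j ⬝ᵥ Φ) • Am j
    let At0 : Matrix (Fin n) (Fin n) ℂ := A0 + ∑ j, α j • Am j
    let L : Matrix (Fin n ⊕ (Fin n ⊕ Fin d × Fin n))
        (Fin n ⊕ (Fin n ⊕ Fin d × Fin n)) ℂ :=
      Matrix.of fun r c =>
        match r, c with
        | Sum.inl i, Sum.inl i' => (At0 + s • A1) i i'
        | Sum.inl i, Sum.inr (Sum.inl i') => (s • A2) i i'
        | Sum.inl i, Sum.inr (Sum.inr ki') => ∑ j, a j ki'.1 * Am j i ki'.2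
        | Sum.inr (Sum.inl i), Sum.inl i' => s * (if i = i' then 1 else 0)
        | Sum.inr (Sum.inl i), Sum.inr (Sum.inl i') => -(if i = i' then 1 else 0)
        | Sum.inr (Sum.inl _), Sum.inr (Sum.inr _) => 0
        | Sum.inr (Sum.inr ki), Sum.inl i' =>
            (c0 ki.1 + s * c1 ki.1) * (if ki.2 = i' then 1 else 0)
        | Sum.inr (Sum.inr _), Sum.inr (Sum.inl _) => 0
        | Sum.inr (Sum.inr ki), Sum.inr (Sum.inr li') =>
            (C0 ki.1 li'.1 + s * C1 ki.1 li'.1) * (if ki.2 = li'.2 then 1 else 0)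
    R.mulVec x = 0 →
    (L.mulVec (Sum.elim x (Sum.elim (fun i => s * x i)
        (fun ki => Φ ki.1 * x ki.2))) = 0 ∧
      Sum.elim x (Sum.elim (fun i : Fin n => s * x i)
        (fun ki : Fin d × Fin n => Φ ki.1 * x ki.2)) ≠ 0) := by
  intro Φ R At0 L hR
  refine ⟨funext fun r => ?_, fun h => hx (funext fun i => congrFun h (Sum.inl i))⟩
  rcases r with i | i | ⟨k, i⟩
  · have hR_split : R = (At0 + s • A1) + s • s • A2 + ∑ j, (a j ⬝ᵥ Φ) • Am j := by
      simp only [R, At0, add_smul, Finset.sum_add_distrib, smul_smul, ← sq]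
      abel
    simp only [L, mulVec, dotProduct, Fintype.sum_sum_type, of_apply, Sum.elim_inl,
      Sum.elim_inr, Pi.zero_apply]
    change ((At0 + s • A1) *ᵥ x) i + (((s • A2) *ᵥ (s • x)) i +
      ∑ p : Fin d × Fin n, (∑ j, a j p.1 * Am j i p.2) * (Φ p.1 * x p.2)) = 0
    rw [← sum_smul_mulVec_apply, mulVec_smul, ← smul_mulVec]
    simpa only [hR_split, add_mulVec, Pi.add_apply, Pi.zero_apply, add_assoc] using congrFun hR i
  · simp [L, mulVec, dotProduct, Fintype.sum_sum_type]
  · have hΦ : (C0 + s • C1) *ᵥ Φ = -(c0 + s • c1) := by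
      rw [mulVec_neg, mulVec_nonsing_inv_mulVec hC]
    simp only [L, mulVec, dotProduct, Fintype.sum_sum_type, of_apply, Sum.elim_inl,
      Sum.elim_inr, zero_mul, Finset.sum_const_zero, zero_add, Pi.zero_apply]
    refine (sum_ite_mul_add_sum_kronecker_one_apply (c0 + s • c1) (C0 + s • C1) Φ x k i).trans ?_
    rw [hΦ, add_neg_cancel, Pi.zero_apply, zero_mul]
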